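/- arXiv:2204.04512 — 5 statements merged into one kernel-verified Lean document; each statement's English description precedes it below -/
import Mathlib

section
/- Let f(x) = x·ln(x) on (e^{-1}, ∞), where f is strictly increasing. Then for all x > e, the inverse function satisfies f^{-1}(x) ≤ 2x/ln(x). -/
/-- For `f y = y * ln y` strictly increasing on `(e⁻¹, ∞)`, the inverse satisfies
`f⁻¹ x ≤ 2 x / ln x` for `x > e`: i.e. if `y > e⁻¹` and `y * ln y = x` then
`y ≤ 2 x / ln x`. -/
theorem inv_of_mul_log_le (x y : ℝ) (hx : Real.exp 1 < x)
    (hy : (Real.exp 1)⁻¹ < y) (hxy : y * Real.log y = x) :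
    y ≤ 2 * x / Real.log x := by
  have hy0 : 0 < y := lt_trans (inv_pos.mpr (Real.exp_pos 1)) hy
  have hey : Real.exp 1 < y := by
    by_contra h
    push_neg at h
    have hl : Real.log y ≤ 1 := by
      calc Real.log y ≤ Real.log (Real.exp 1) := Real.log_le_log hy0 h
        _ = 1 := Real.log_exp 1
    nlinarith [Real.exp_pos 1]
  have hlny : 1 < Real.log y := by
    have := Real.log_lt_log (Real.exp_pos 1) hey
    rwa [Real.log_exp] at this
  have hlny0 : 0 < Real.log y := by linarith
  have hlogx : Real.log x = Real.log y + Real.log (Real.log y) := by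
    rw [← hxy, Real.log_mul (ne_of_gt hy0) (ne_of_gt hlny0)]
  have hll : Real.log (Real.log y) ≤ Real.log y - 1 :=
    Real.log_le_sub_one_of_pos hlny0
  have hlx2 : Real.log x ≤ 2 * Real.log y := by rw [hlogx]; linarith
  have hlx0 : 0 < Real.log x := by
    have h1 : (1:ℝ) < x := lt_trans (by nlinarith [Real.add_one_le_exp (1:ℝ)]) hx
    exact Real.log_pos h1
  rw [le_div_iff₀ hlx0]
  nlinarith
end

section
/- Let b ∈ ℝ, c > 0, n ∈ ℕ with b + ln c - ln n > 1. Define R_b(x) = Σᵢ xᵢ ln xᵢ + b·Σᵢ xᵢ on [0,∞)ⁿ (interpreting 0·ln 0 = 0). Then the Lebesgue volume of {x ∈ [0,∞)ⁿ : R_b(x) < c} is at most (1/(n!·n)) · 2ⁿcⁿ/(b + ln c - ln n)ⁿ. -/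
/-!
Write `s = ∑ i, x i`. By Jensen's inequality for the convex function `t ↦ t log t`,
`R_b x ≥ s (log (s / n) + b)`, and the right-hand side is increasing in `s` once it is positive.
Hence the sublevel set `{R_b < c}` lies in the corner simplex `{x ≥ 0, ∑ i, x i ≤ T}` whenever
`c ≤ T (log (T / n) + b)`, and that simplex has volume `Tⁿ / n!`. With `S = b + log c - log n`,
the radius `T = 2c / (S n^{1/n})` qualifies by an elementary numerical estimate, and
`Tⁿ / n! = 2ⁿ cⁿ / (n! n Sⁿ)`.
-/

open MeasureTheory Set Real

def cornerSimplex (ι : Type*) [Fintype ι] (T : ℝ) : Set (ι → ℝ) :=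
  {x | (∀ i, 0 ≤ x i) ∧ ∑ i, x i ≤ T}

section CornerSimplex

variable {ι : Type*} [Fintype ι]

theorem measurableSet_cornerSimplex (T : ℝ) : MeasurableSet (cornerSimplex ι T) := by
  unfold cornerSimplex
  measurability

theorem cornerSimplex_eq_empty {T : ℝ} (hT : T < 0) : cornerSimplex ι T = ∅ :=
  eq_empty_of_forall_notMem fun _ hx =>
    hT.not_ge ((Finset.sum_nonneg fun i _ => hx.1 i).trans hx.2)

theorem preimage_cons_cornerSimplex (n : ℕ) (T t : ℝ) :
    Fin.cons t ⁻¹' cornerSimplex (Fin (n + 1)) T =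
      if 0 ≤ t then cornerSimplex (Fin n) (T - t) else ∅ := by
  split_ifs with ht <;> ext y <;>
    simp [cornerSimplex, Fin.forall_fin_succ, Fin.sum_univ_succ, ht, le_sub_iff_add_le']

end CornerSimplex

theorem lintegral_Icc_ofReal_sub_pow_div_factorial (n : ℕ) {T : ℝ} (hT : 0 ≤ T) :
    ∫⁻ t in Icc 0 T, ENNReal.ofReal ((T - t) ^ n / n.factorial) =
      ENNReal.ofReal (T ^ (n + 1) / (n + 1).factorial) := by
  have hnonneg : ∀ᵐ t ∂volume.restrict (Icc 0 T), 0 ≤ (T - t) ^ n / n.factorial :=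
    (ae_restrict_mem measurableSet_Icc).mono fun t ht => by
      have : 0 ≤ T - t := sub_nonneg.2 ht.2
      positivity
  rw [← ofReal_integral_eq_lintegral_ofReal (by fun_prop : Continuous _).integrableOn_Icc hnonneg,
    integral_Icc_eq_integral_Ioc, ← intervalIntegral.integral_of_le hT,
    intervalIntegral.integral_comp_sub_left (fun s => s ^ n / n.factorial),
    intervalIntegral.integral_div, integral_pow, Nat.factorial_succ]
  push_cast
  field_simp
  simp

theorem volume_cornerSimplex (n : ℕ) {T : ℝ} (hT : 0 ≤ T) :
    volume (cornerSimplex (Fin n) T) = ENNReal.ofReal (T ^ n / n.factorial) := by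
  induction n generalizing T with
  | zero =>
    have : cornerSimplex (Fin 0) T = univ := by simp [cornerSimplex, hT]
    simp [this, volume_pi]
  | succ n ih =>
    have hslice (t : ℝ) : volume (Fin.cons t ⁻¹' cornerSimplex (Fin (n + 1)) T) =
        (Icc 0 T).indicator (fun t => ENNReal.ofReal ((T - t) ^ n / n.factorial)) t := by
      rw [preimage_cons_cornerSimplex]
      by_cases ht : 0 ≤ t
      · by_cases htT : t ≤ T
        · rw [if_pos ht, ih (sub_nonneg.2 htT),
            indicator_of_mem (show t ∈ Icc 0 T from ⟨ht, htT⟩)]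
        · rw [if_pos ht, cornerSimplex_eq_empty (by linarith), indicator_of_notMem (by grind)]
          simp
      · rw [if_neg ht, indicator_of_notMem (by grind)]
        simp
    rw [← (volume_preserving_piFinSuccAbove (fun _ => ℝ) 0).symm.measure_preimage
        (measurableSet_cornerSimplex T).nullMeasurableSet, Measure.volume_eq_prod,
      Measure.prod_apply ((measurableSet_cornerSimplex T).preimage (MeasurableEquiv.measurable _))]
    simp only [MeasurableEquiv.piFinSuccAbove_symm_apply, Fin.insertNthEquiv_zero,
      ← preimage_comp]
    rw [← lintegral_Icc_ofReal_sub_pow_div_factorial n hT,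
      ← lintegral_indicator measurableSet_Icc]
    exact lintegral_congr hslice

theorem sum_mul_log_div_card_le {ι : Type*} [Fintype ι] [Nonempty ι] {x : ι → ℝ}
    (hx : ∀ i, 0 ≤ x i) :
    (∑ i, x i) * log ((∑ i, x i) / Fintype.card ι) ≤ ∑ i, x i * log (x i) := by
  have hN : (0 : ℝ) < Fintype.card ι := by exact_mod_cast Fintype.card_pos
  have hJ := convexOn_mul_log.map_sum_le (t := Finset.univ)
    (w := fun _ => (Fintype.card ι : ℝ)⁻¹) (fun _ _ => by positivity) (by simp [hN.ne'])
    (fun i _ => hx i)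
  simp only [smul_eq_mul, ← Finset.mul_sum] at hJ
  calc (∑ i, x i) * log ((∑ i, x i) / Fintype.card ι)
      = Fintype.card ι * ((Fintype.card ι : ℝ)⁻¹ * ∑ i, x i) *
          log ((Fintype.card ι : ℝ)⁻¹ * ∑ i, x i) := by field_simp
    _ ≤ Fintype.card ι * ((Fintype.card ι : ℝ)⁻¹ * ∑ i, x i * log (x i)) := by
      rw [mul_assoc]; gcongr
    _ = ∑ i, x i * log (x i) := by field_simp

theorem sublevel_subset_cornerSimplex {ι : Type*} [Fintype ι] [Nonempty ι] {b c T : ℝ}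
    (hT : 0 < T) (hpos : 0 ≤ log (T / Fintype.card ι) + b)
    (hc : c ≤ T * (log (T / Fintype.card ι) + b)) :
    {x : ι → ℝ | (∀ i, 0 ≤ x i) ∧ ∑ i, x i * log (x i) + b * ∑ i, x i < c} ⊆
      cornerSimplex ι T := by
  rintro x ⟨hx, hlt⟩
  refine ⟨hx, le_of_not_gt fun hTs => hlt.not_ge ?_⟩
  calc c ≤ T * (log (T / Fintype.card ι) + b) := hc
    _ ≤ (∑ i, x i) * (log ((∑ i, x i) / Fintype.card ι) + b) := by
      gcongr
      exact Finset.sum_nonneg fun i _ => hx i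
    _ = (∑ i, x i) * log ((∑ i, x i) / Fintype.card ι) + b * ∑ i, x i := by ring
    _ ≤ _ := by gcongr; exact sum_mul_log_div_card_le hx

theorem natCast_le_pow (n : ℕ) : (n : ℝ) ≤ (14423 / 10000) ^ n := by
  induction n with
  | zero => norm_num
  | succ k ih =>
    rcases lt_or_ge k 3 with hk | hk
    · interval_cases k <;> norm_num
    · have hk' : (3 : ℝ) ≤ k := by exact_mod_cast hk
      push_cast
      calc (k : ℝ) + 1 ≤ 14423 / 10000 * k := by linarith
        _ ≤ 14423 / 10000 * (14423 / 10000) ^ k := by gcongr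
        _ = (14423 / 10000) ^ (k + 1) := by ring

theorem natCast_rpow_inv_le (n : ℕ) : (n : ℝ) ^ (n⁻¹ : ℝ) ≤ 14423 / 10000 := by
  rcases n.eq_zero_or_pos with rfl | hn
  · norm_num
  · refine (pow_le_pow_iff_left₀ (by positivity) (by norm_num) hn.ne').mp ?_
    rw [rpow_inv_natCast_pow n.cast_nonneg hn.ne']
    exact natCast_le_pow n

theorem log_div_self_le {x : ℝ} (hx : 0 < x) : log x / x ≤ 368 / 1000 := by
  have hlog := log_le_sub_one_of_pos (div_pos hx (exp_pos 1))
  rw [log_div hx.ne' (exp_ne_zero 1), log_exp] at hlog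
  have he : 1000 / 368 < exp 1 := lt_trans (by norm_num) exp_one_gt_d9
  have hx_div : x / exp 1 ≤ 368 / 1000 * x := by
    rw [div_le_iff₀ (exp_pos 1)]
    nlinarith
  rw [div_le_iff₀ hx]
  linarith

theorem log_le_div_add_log_sub_one {x a : ℝ} (hx : 0 < x) (ha : 0 < a) :
    log x ≤ x / a + log a - 1 := by
  have := log_le_sub_one_of_pos (div_pos hx ha)
  rw [log_div hx.ne' ha.ne'] at this
  linarith

/-- The constants bound `n ^ (1 / n) ≤ 3 ^ (1 / 3)` and `log n / n ≤ 1 / e`; with the tangent line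
of `log` at `18 / 5` the inequality holds with a margin of about `0.08`. -/
theorem mul_le_two_mul_add_log_two_sub_log {S E u : ℝ} (hS : 1 ≤ S) (hE : E ≤ 14423 / 10000)
    (hu : u ≤ 368 / 1000) :
    S * E ≤ 2 * (S + log 2 - log S - u) := by
  have hlog2 : 6931 / 10000 < log 2 := lt_trans (by norm_num) log_two_gt_d9
  have hlog2' : log 2 < 69315 / 100000 := lt_trans log_two_lt_d9 (by norm_num)
  have hlogS := log_le_div_add_log_sub_one (by linarith : 0 < S) (by norm_num : (0 : ℝ) < 18 / 5)
  have hlog : log (18 / 5 : ℝ) ≤ 2 * log 2 - 1 / 10 := by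
    have h910 := log_le_sub_one_of_pos (by norm_num : (0 : ℝ) < 9 / 10)
    rw [show (18 / 5 : ℝ) = 2 * 2 * (9 / 10) by norm_num, log_mul (by norm_num) (by norm_num),
      log_mul (by norm_num) (by norm_num)]
    linarith
  nlinarith

/-- Volume bound for the sublevel set of `R_b x = Σᵢ xᵢ ln xᵢ + b Σᵢ xᵢ` on `[0,∞)ⁿ`:
if `b + ln c - ln n > 1` then the Lebesgue volume of `{x ∈ [0,∞)ⁿ : R_b x < c}` is at
most `(1/(n! n)) · 2ⁿ cⁿ / (b + ln c - ln n)ⁿ`. -/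
theorem volume_sublevel_le (n : ℕ) (hn : 0 < n) (b c : ℝ) (hc : 0 < c)
    (h : 1 < b + Real.log c - Real.log n) :
    volume {x : Fin n → ℝ | (∀ i, 0 ≤ x i) ∧
        (∑ i, x i * Real.log (x i)) + b * ∑ i, x i < c} ≤
      ENNReal.ofReal
        (2 ^ n * c ^ n / (n.factorial * n * (b + Real.log c - Real.log n) ^ n)) := by
  set S := b + log c - log n with hS_def
  have hn' : (0 : ℝ) < n := by exact_mod_cast hn
  have : Nonempty (Fin n) := Fin.pos_iff_nonempty.mp hn
  set E := (n : ℝ) ^ (n⁻¹ : ℝ)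
  have hEn : E ^ n = n := rpow_inv_natCast_pow hn'.le hn.ne'
  have hSE : 0 < S * E := mul_pos (by linarith) (by positivity)
  set T := 2 * c / (S * E)
  have hT : 0 < T := by positivity
  have hA : log (T / n) + b = S + log 2 - log S - log n / n := by
    rw [log_div hT.ne' hn'.ne', log_div (by positivity) hSE.ne', log_mul two_ne_zero hc.ne',
      log_mul (by linarith) (by positivity), log_rpow hn', hS_def]
    ring
  have hkey : S * E ≤ 2 * (log (T / n) + b) := hA ▸
    mul_le_two_mul_add_log_two_sub_log h.le (natCast_rpow_inv_le n) (log_div_self_le hn')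
  have hc_le : c ≤ T * (log (T / n) + b) := by
    rw [div_mul_eq_mul_div, le_div_iff₀ hSE]
    nlinarith
  have hsub := sublevel_subset_cornerSimplex (ι := Fin n) (b := b) (c := c) hT
    (by rw [Fintype.card_fin]; linarith) (by rwa [Fintype.card_fin])
  calc _ ≤ volume (cornerSimplex (Fin n) T) := measure_mono hsub
    _ = ENNReal.ofReal (T ^ n / n.factorial) := volume_cornerSimplex n hT.le
    _ = _ := by
      rw [div_pow, mul_pow, mul_pow, hEn]
      congr 1
      field_simp
end

section
/- Suppose positive reals λ₁ ≥ λ₂ ≥ ... satisfy λᵢ ≤ C/i^γ for some C, γ > 0. Define ℰ(ε) = Σ_{i: λᵢ > ε} ln(λᵢ/ε). Then ℰ(C/N^γ) ≤ N·γ·(ln 2 + √2) for every N ∈ ℕ, and hence ℰ(ε) = O(ε^{-1/γ}) as ε → 0. -/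
private lemma fact_bound : ∀ n : ℕ, (n : ℝ) ^ n ≤ Real.exp n * n.factorial := by
  intro n
  induction n with
  | zero => simp
  | succ m ih =>
    have h1 : ((m : ℝ) + 1) ^ m ≤ Real.exp 1 * (m : ℝ) ^ m := by
      rcases Nat.eq_zero_or_pos m with hm | hm
      · subst hm; simpa using Real.one_le_exp (by norm_num : (0:ℝ) ≤ 1)
      · have hm' : (0:ℝ) < m := by exact_mod_cast hm
        have h2 : (m:ℝ) + 1 ≤ Real.exp (1/(m:ℝ)) * m := by
          have h := Real.add_one_le_exp (1/(m:ℝ))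
          have h' := mul_le_mul_of_nonneg_right h hm'.le
          calc (m:ℝ) + 1 = (1/(m:ℝ) + 1) * m := by field_simp; ring
            _ ≤ Real.exp (1/(m:ℝ)) * m := h'
        calc ((m:ℝ)+1)^m ≤ (Real.exp (1/(m:ℝ)) * m)^m := by
              apply pow_le_pow_left₀ (by positivity) h2
          _ = Real.exp 1 * (m:ℝ)^m := by
              rw [mul_pow, ← Real.exp_nat_mul]
              congr 2
              field_simp
    have hfm : (0:ℝ) < (m.factorial : ℝ) := by exact_mod_cast m.factorial_pos
    have hmm : (0:ℝ) ≤ (m:ℝ) ^ m := by positivity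
    have hexp : Real.exp ((m:ℕ)+1 : ℕ) = Real.exp m * Real.exp 1 := by
      push_cast
      rw [← Real.exp_add]
    have he1 : (0:ℝ) < Real.exp 1 := Real.exp_pos 1
    have hem : (0:ℝ) < Real.exp (m:ℝ) := Real.exp_pos _
    push_cast [pow_succ, Nat.factorial_succ]
    calc ((m:ℝ)+1)^m * ((m:ℝ)+1)
        ≤ (Real.exp 1 * (m:ℝ)^m) * ((m:ℝ)+1) :=
          mul_le_mul_of_nonneg_right h1 (by positivity)
      _ ≤ (Real.exp 1 * (Real.exp (m:ℝ) * (m.factorial:ℝ))) * ((m:ℝ)+1) := by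
          have h4 : (m:ℝ)^m ≤ Real.exp (m:ℝ) * (m.factorial:ℝ) := ih
          have := mul_le_mul_of_nonneg_left h4 he1.le
          exact mul_le_mul_of_nonneg_right this (by positivity)
      _ = Real.exp ((m:ℝ)+1) * (((m:ℝ)+1) * (m.factorial:ℝ)) := by
          rw [Real.exp_add]; ring

private lemma log_fact (m : ℕ) :
    Real.log (m.factorial : ℝ) = ∑ i ∈ Finset.range m, Real.log ((i : ℝ) + 1) := by
  induction m with
  | zero => simp
  | succ k ih =>
    rw [Finset.sum_range_succ, ← ih, Nat.factorial_succ]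
    push_cast
    rw [Real.log_mul (by positivity) (by exact_mod_cast k.factorial_pos.ne')]
    ring

private lemma sum_log_bound (m : ℕ) :
    ∑ i ∈ Finset.range m, (Real.log ((m:ℝ)+1) - Real.log ((i:ℝ)+1)) ≤ (m:ℝ) + 1 := by
  rw [Finset.sum_sub_distrib, Finset.sum_const, Finset.card_range, ← log_fact]
  have h := fact_bound (m+1)
  have h' : ((m:ℝ)+1)^(m+1) ≤ Real.exp ((m:ℝ)+1) * ((m+1).factorial : ℝ) := by
    push_cast at h ⊢
    convert h using 2
  have hlog := Real.log_le_log (by positivity) h'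
  rw [Real.log_pow, Real.log_mul (Real.exp_ne_zero _)
      (by exact_mod_cast (m+1).factorial_pos.ne'), Real.log_exp] at hlog
  have hfs : Real.log (((m+1).factorial : ℝ))
      = Real.log ((m:ℝ)+1) + Real.log (m.factorial : ℝ) := by
    rw [Nat.factorial_succ]
    push_cast
    rw [Real.log_mul (by positivity) (by exact_mod_cast m.factorial_pos.ne')]
  rw [hfs] at hlog
  rw [nsmul_eq_mul]
  push_cast at hlog ⊢
  linarith

private lemma key (C γ : ℝ) (hC : 0 < C) (hγ : 0 < γ) (l : ℕ → ℝ)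
    (hl : ∀ i : ℕ, l i ≤ C / ((i : ℝ) + 1) ^ γ) (ε : ℝ) (hε : 0 < ε)
    (N : ℕ) (hN : 0 < N) (hNε : C / (N : ℝ) ^ γ ≤ ε) :
    (∑' i, if ε < l i then Real.log (l i / ε) else 0) ≤
      (N : ℝ) * γ * (Real.log 2 + Real.sqrt 2) := by
  obtain ⟨m, rfl⟩ : ∃ m, N = m + 1 := ⟨N - 1, (Nat.succ_pred_eq_of_pos hN).symm⟩
  have hvanish : ∀ i ∉ Finset.range m,
      (if ε < l i then Real.log (l i / ε) else 0) = 0 := by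
    intro i hi
    rw [Finset.mem_range, not_lt] at hi
    rw [if_neg]
    intro hli
    have h1 : ((m:ℝ)+1) ≤ ((i:ℝ)+1) := by
      have : (m:ℝ) ≤ i := by exact_mod_cast hi
      linarith
    have h2 : ((m:ℝ)+1)^γ ≤ ((i:ℝ)+1)^γ :=
      Real.rpow_le_rpow (by positivity) h1 hγ.le
    have h3 : C / ((i:ℝ)+1)^γ ≤ C / ((m:ℝ)+1)^γ :=
      div_le_div_of_nonneg_left hC.le (by positivity) h2
    have := hl i
    push_cast at hNε
    linarith
  rw [tsum_eq_sum hvanish]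
  have hterm : ∀ i ∈ Finset.range m,
      (if ε < l i then Real.log (l i / ε) else 0) ≤
        γ * (Real.log ((m:ℝ)+1) - Real.log ((i:ℝ)+1)) := by
    intro i hi
    rw [Finset.mem_range] at hi
    have hi1 : ((i:ℝ)+1) ≤ ((m:ℝ)+1) := by
      have : (i:ℝ) ≤ m := by exact_mod_cast hi.le
      linarith
    have hlogle : Real.log ((i:ℝ)+1) ≤ Real.log ((m:ℝ)+1) :=
      Real.log_le_log (by positivity) hi1
    have hrhs : 0 ≤ γ * (Real.log ((m:ℝ)+1) - Real.log ((i:ℝ)+1)) := by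
      apply mul_nonneg hγ.le
      linarith
    split_ifs with hli
    · have hlipos : 0 < l i := lt_trans hε hli
      rw [Real.log_div hlipos.ne' hε.ne']
      have hub : Real.log (l i) ≤ Real.log C - γ * Real.log ((i:ℝ)+1) := by
        have := Real.log_le_log hlipos (hl i)
        rwa [Real.log_div hC.ne' (by positivity),
          Real.log_rpow (by positivity)] at this
      have hlb : Real.log C - γ * Real.log ((m:ℝ)+1) ≤ Real.log ε := by
        have h0 : Real.log (C / ((m:ℝ)+1)^γ) ≤ Real.log ε := by
          apply Real.log_le_log (by positivity)
          push_cast at hNε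
          exact hNε
        rwa [Real.log_div hC.ne' (by positivity),
          Real.log_rpow (by positivity)] at h0
      linarith
    · exact hrhs
  calc (∑ i ∈ Finset.range m, (if ε < l i then Real.log (l i / ε) else 0))
      ≤ ∑ i ∈ Finset.range m, γ * (Real.log ((m:ℝ)+1) - Real.log ((i:ℝ)+1)) :=
        Finset.sum_le_sum hterm
    _ = γ * ∑ i ∈ Finset.range m, (Real.log ((m:ℝ)+1) - Real.log ((i:ℝ)+1)) := by
        rw [Finset.mul_sum]
    _ ≤ γ * ((m:ℝ)+1) := by
        exact mul_le_mul_of_nonneg_left (sum_log_bound m) hγ.le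
    _ ≤ ((m+1 : ℕ) : ℝ) * γ * (Real.log 2 + Real.sqrt 2) := by
        have h2 : (1:ℝ) ≤ Real.sqrt 2 := by
          rw [show (1:ℝ) = Real.sqrt 1 from (Real.sqrt_one).symm]
          exact Real.sqrt_le_sqrt (by norm_num)
        have h3 : (0:ℝ) ≤ Real.log 2 := Real.log_nonneg (by norm_num)
        have h4 : (1:ℝ) ≤ Real.log 2 + Real.sqrt 2 := by linarith
        have h5 : (0:ℝ) ≤ γ * ((m:ℝ)+1) := by positivity
        push_cast
        calc γ * ((m:ℝ)+1) = γ * ((m:ℝ)+1) * 1 := by ring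
          _ ≤ γ * ((m:ℝ)+1) * (Real.log 2 + Real.sqrt 2) :=
              mul_le_mul_of_nonneg_left h4 h5
          _ = ((m:ℝ)+1) * γ * (Real.log 2 + Real.sqrt 2) := by ring

/-- If positive nonincreasing `λᵢ` satisfy `λᵢ ≤ C / iᵞ` (here `l i` is the `(i+1)`-st
eigenvalue), then `ℰ(C/Nᵞ) ≤ N γ (ln 2 + √2)` for all `N ≥ 1`, where
`ℰ ε = Σ_{i : λᵢ > ε} ln (λᵢ / ε)`; hence `ℰ(ε) = O(ε^{-1/γ})` as `ε → 0`. -/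
theorem entropy_sum_decay (C γ : ℝ) (hC : 0 < C) (hγ : 0 < γ)
    (l : ℕ → ℝ) (hpos : ∀ i, 0 < l i) (hdec : ∀ i, l (i + 1) ≤ l i)
    (hl : ∀ i : ℕ, l i ≤ C / ((i : ℝ) + 1) ^ γ)
    (E : ℝ → ℝ)
    (hE : ∀ ε, E ε = ∑' i, if ε < l i then Real.log (l i / ε) else 0) :
    (∀ N : ℕ, 0 < N →
        E (C / (N : ℝ) ^ γ) ≤ (N : ℝ) * γ * (Real.log 2 + Real.sqrt 2)) ∧
      ∃ C' > (0 : ℝ), ∃ ε₀ > (0 : ℝ), ∀ ε : ℝ, 0 < ε → ε ≤ ε₀ →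
        E ε ≤ C' * ε ^ (-(1 / γ)) := by
  have hK : (0:ℝ) < Real.log 2 + Real.sqrt 2 := by
    have h2 : (0:ℝ) < Real.sqrt 2 := Real.sqrt_pos.mpr (by norm_num)
    have h3 : (0:ℝ) ≤ Real.log 2 := Real.log_nonneg (by norm_num)
    linarith
  constructor
  · intro N hN
    rw [hE]
    have hNpos : (0:ℝ) < (N:ℝ)^γ := by
      have : (0:ℝ) < (N:ℝ) := by exact_mod_cast hN
      positivity
    exact key C γ hC hγ l hl _ (by positivity) N hN le_rfl
  · refine ⟨2 * γ * (Real.log 2 + Real.sqrt 2) * C ^ (1/γ), by positivity, C, hC, ?_⟩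
    intro ε hε hεC
    set x := (C / ε) ^ (1/γ) with hx
    have hCε : (1:ℝ) ≤ C / ε := (one_le_div hε).mpr hεC
    have hx1 : (1:ℝ) ≤ x := by
      have := Real.rpow_le_rpow (by norm_num : (0:ℝ) ≤ 1) hCε
        (by positivity : (0:ℝ) ≤ 1/γ)
      rwa [Real.one_rpow] at this
    set N := ⌈x⌉₊ with hNdef
    have hN : 0 < N := Nat.ceil_pos.mpr (by linarith)
    have hxN : x ≤ (N:ℝ) := Nat.le_ceil x
    have hN2 : (N:ℝ) ≤ 2 * x := by
      have := Nat.ceil_lt_add_one (by linarith : (0:ℝ) ≤ x)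
      linarith
    have hxγ : x ^ γ = C / ε := by
      rw [hx, ← Real.rpow_mul (by positivity), one_div_mul_cancel hγ.ne', Real.rpow_one]
    have hNγ : C / ε ≤ (N:ℝ)^γ := by
      rw [← hxγ]
      exact Real.rpow_le_rpow (by positivity) hxN hγ.le
    have hNγpos : (0:ℝ) < (N:ℝ)^γ := lt_of_lt_of_le (by positivity) hNγ
    have hNε : C / (N:ℝ)^γ ≤ ε := by
      rw [div_le_iff₀ hNγpos]
      calc C = (C/ε) * ε := by field_simp
        _ ≤ (N:ℝ)^γ * ε := by
            exact mul_le_mul_of_nonneg_right hNγ hε.le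
        _ = ε * (N:ℝ)^γ := by ring
    have hmain : E ε ≤ (N:ℝ) * γ * (Real.log 2 + Real.sqrt 2) := by
      rw [hE]
      exact key C γ hC hγ l hl ε hε N hN hNε
    have hxval : x = C ^ (1/γ) * ε ^ (-(1/γ)) := by
      rw [hx, Real.div_rpow hC.le hε.le, Real.rpow_neg hε.le, div_eq_mul_inv]
    calc E ε ≤ (N:ℝ) * γ * (Real.log 2 + Real.sqrt 2) := hmain
      _ ≤ (2 * x) * γ * (Real.log 2 + Real.sqrt 2) := by
          apply mul_le_mul_of_nonneg_right (mul_le_mul_of_nonneg_right hN2 hγ.le) hK.le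
      _ = 2 * γ * (Real.log 2 + Real.sqrt 2) * C ^ (1/γ) * ε ^ (-(1/γ)) := by
          rw [hxval]; ring
end

section
/- Let λ₁ ≥ λ₂ ≥ ... ≥ λ_N > 0 and ε > 0 with C/N^γ ≥ ε and λᵢ ≤ C/i^γ. For X the random variable max{ln(Y/ε), 0} where Y is uniform on {λ₁,...,λ_N}, one has Var[X] ≤ ln²(C/(εN^γ)) + 2γ·ln(C/(εN^γ)) + 2γ². -/
/-!
Write `L = log (C / (ε Nᵞ))` and `sₖ = log N - log k`. The variance is at most the second
moment, and `λₖ ≤ C / kᵞ` gives `0 ≤ max (log (λₖ / ε)) 0 ≤ L + γ sₖ`, so it suffices that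
`∑ₖ sₖ ≤ N` and `∑ₖ sₖ² ≤ 2N`. These are the discrete forms of `∫₀^N log (N/x) dx = N` and
`∫₀^N log² (N/x) dx = 2N`; instead of comparing with the integrals we induct on `N`: passing
from `N` to `N + 1` shifts each `sₖ` by `δ = log (N + 1) - log N`, and `N δ ≤ 1`.
-/

open Real Finset

theorem natCast_mul_log_succ_sub_log_le_one (n : ℕ) : n * (log (n + 1) - log n) ≤ 1 := by
  rcases Nat.eq_zero_or_pos n with rfl | hn
  · simp
  have hn' : (0 : ℝ) < n := by exact_mod_cast hn
  have h := log_le_sub_one_of_pos (show (0 : ℝ) < (n + 1) / n by positivity)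
  rw [log_div (by positivity) hn'.ne'] at h
  calc n * (log (n + 1) - log n) ≤ n * ((n + 1) / n - 1) := by gcongr
    _ = 1 := by field_simp; ring

theorem log_natCast_le_log_succ (n : ℕ) : log n ≤ log (n + 1) := by
  rcases Nat.eq_zero_or_pos n with rfl | hn
  · simp
  exact log_le_log (by exact_mod_cast hn) (by linarith)

theorem sum_range_log_sub_log_succ_le {n : ℕ} (hn : 1 ≤ n) :
    ∑ k ∈ range n, (log n - log (k + 1)) ≤ n - 1 := by
  induction n, hn using Nat.le_induction with
  | base => simp
  | succ n hn ih =>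
    have hsplit : ∀ k : ℕ, log ((n + 1 : ℕ) : ℝ) - log (k + 1)
        = (log n - log (k + 1)) + (log (n + 1) - log n) := fun k => by push_cast; ring
    simp only [sum_range_succ, hsplit, sum_add_distrib, sum_const, card_range, nsmul_eq_mul]
    push_cast
    linarith [natCast_mul_log_succ_sub_log_le_one n]

theorem sum_range_sq_log_sub_log_succ_le {n : ℕ} (hn : 1 ≤ n) :
    ∑ k ∈ range n, (log n - log (k + 1)) ^ 2 ≤ 2 * (n - 1) := by
  induction n, hn using Nat.le_induction with
  | base => simp
  | succ n hn ih =>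
    set δ := log (n + 1) - log n
    have hsplit : ∀ k : ℕ, (log ((n + 1 : ℕ) : ℝ) - log (k + 1)) ^ 2
        = (log n - log (k + 1)) ^ 2 + 2 * δ * (log n - log (k + 1)) + δ ^ 2 :=
      fun k => by push_cast; ring
    simp only [sum_range_succ _ n, hsplit, sum_add_distrib, ← mul_sum, sum_const, card_range,
      nsmul_eq_mul]
    have hδ : 0 ≤ δ := sub_nonneg.2 (log_natCast_le_log_succ n)
    have hnδ := natCast_mul_log_succ_sub_log_le_one n
    have ha := sum_range_log_sub_log_succ_le hn
    push_cast
    nlinarith [mul_le_mul_of_nonneg_left ha hδ]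

theorem sum_range_sq_add_mul_log_sub_log_succ_le {L γ : ℝ} (hL : 0 ≤ L) (hγ : 0 ≤ γ) {n : ℕ}
    (hn : 1 ≤ n) :
    ∑ k ∈ range n, (L + γ * (log n - log (k + 1))) ^ 2 ≤ n * (L ^ 2 + 2 * γ * L + 2 * γ ^ 2) := by
  have hexpand : ∀ k : ℕ, (L + γ * (log n - log (k + 1))) ^ 2
      = L ^ 2 + 2 * γ * L * (log n - log (k + 1)) + γ ^ 2 * (log n - log (k + 1)) ^ 2 :=
    fun k => by ring
  simp only [hexpand, sum_add_distrib, ← mul_sum, sum_const, card_range, nsmul_eq_mul]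
  have h₁ := mul_le_mul_of_nonneg_left (sum_range_log_sub_log_succ_le hn)
    (by positivity : 0 ≤ 2 * γ * L)
  have h₂ := mul_le_mul_of_nonneg_left (sum_range_sq_log_sub_log_succ_le hn)
    (by positivity : 0 ≤ γ ^ 2)
  nlinarith

theorem log_div_le_of_le_div_rpow {l C γ ε x N : ℝ} (hl₀ : 0 < l) (hε : 0 < ε)
    (hx : 0 < x) (hN : 0 < N) (hl : l ≤ C / x ^ γ) :
    log (l / ε) ≤ log (C / (ε * N ^ γ)) + γ * (log N - log x) := by
  have hC : 0 < C := by
    have := hl₀.trans_le hl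
    rwa [div_pos_iff_of_pos_right (rpow_pos_of_pos hx γ)] at this
  calc log (l / ε) ≤ log (C / x ^ γ / ε) := by gcongr
    _ = log (C / (ε * N ^ γ)) + γ * (log N - log x) := by
      rw [log_div (by positivity) hε.ne', log_div hC.ne' (by positivity),
        log_div hC.ne' (by positivity), log_mul hε.ne' (by positivity), log_rpow hx,
        log_rpow hN]
      ring

theorem variance_bound_general (N : ℕ) (hN : 0 < N) (C γ ε : ℝ)
    (hγ : 0 < γ) (hε : 0 < ε)
    (l : Fin N → ℝ) (hpos : ∀ i, 0 < l i)
    (hl : ∀ i : Fin N, l i ≤ C / ((i : ℝ) + 1) ^ γ)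
    (hεN : ε ≤ C / (N : ℝ) ^ γ) :
    (1 / (N : ℝ)) * ∑ i, (max (Real.log (l i / ε)) 0) ^ 2 -
        ((1 / (N : ℝ)) * ∑ i, max (Real.log (l i / ε)) 0) ^ 2 ≤
      (Real.log (C / (ε * (N : ℝ) ^ γ))) ^ 2 +
        2 * γ * Real.log (C / (ε * (N : ℝ) ^ γ)) + 2 * γ ^ 2 := by
  set L := log (C / (ε * (N : ℝ) ^ γ))
  have hN' : (0 : ℝ) < N := by exact_mod_cast hN
  have hL : 0 ≤ L := log_nonneg <| (one_le_div (by positivity)).2 <|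
    (le_div_iff₀ (rpow_pos_of_pos hN' γ)).1 hεN
  have hX : ∀ i : Fin N, max (log (l i / ε)) 0 ≤ L + γ * (log N - log (i + 1)) := by
    intro i
    have hiN : log ((i : ℝ) + 1) ≤ log N :=
      log_le_log (by positivity) (by exact_mod_cast i.isLt)
    exact max_le (log_div_le_of_le_div_rpow (hpos i) hε (by positivity) hN' (hl i))
      (add_nonneg hL (mul_nonneg hγ.le (sub_nonneg.2 hiN)))
  calc _ ≤ 1 / (N : ℝ) * ∑ i, max (log (l i / ε)) 0 ^ 2 := sub_le_self _ (sq_nonneg _)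
    _ ≤ 1 / (N : ℝ) * ∑ k ∈ range N, (L + γ * (log N - log (k + 1))) ^ 2 := by
      rw [← Fin.sum_univ_eq_sum_range (fun k => (L + γ * (log N - log (k + 1))) ^ 2)]
      gcongr with i
      exact hX i
    _ ≤ 1 / (N : ℝ) * (N * (L ^ 2 + 2 * γ * L + 2 * γ ^ 2)) := by
      gcongr
      exact sum_range_sq_add_mul_log_sub_log_succ_le hL hγ.le hN
    _ = L ^ 2 + 2 * γ * L + 2 * γ ^ 2 := by field_simp

/-- Variance bound for `X = max (ln (Y/ε)) 0` where `Y` is uniform on `{λ₁,…,λ_N}`,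
assuming `λᵢ ≤ C/iᵞ` and `ε ≤ C/Nᵞ`. -/
theorem variance_bound (N : ℕ) (hN : 0 < N) (C γ ε : ℝ)
    (hC : 0 < C) (hγ : 0 < γ) (hε : 0 < ε)
    (l : Fin N → ℝ) (hpos : ∀ i, 0 < l i)
    (hdec : ∀ i j : Fin N, i ≤ j → l j ≤ l i)
    (hl : ∀ i : Fin N, l i ≤ C / ((i : ℝ) + 1) ^ γ)
    (hεN : ε ≤ C / (N : ℝ) ^ γ) :
    (1 / (N : ℝ)) * ∑ i, (max (Real.log (l i / ε)) 0) ^ 2 -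
        ((1 / (N : ℝ)) * ∑ i, max (Real.log (l i / ε)) 0) ^ 2 ≤
      (Real.log (C / (ε * (N : ℝ) ^ γ))) ^ 2 +
        2 * γ * Real.log (C / (ε * (N : ℝ) ^ γ)) + 2 * γ ^ 2 :=
  variance_bound_general N hN C γ ε hγ hε l hpos hl hεN
end

section
/- For R > 1 and the Bernstein ellipse B_r = {((r+r^{-1})cos φ)/2 + i((r-r^{-1})sin φ)/2 : φ ∈ [0,2π)}, one has min over t ∈ [-1,1] and z ∈ B_r of Re((z - t)²) equals -(r - r^{-1})²/4. -/
/-- For `r > 1` and the Bernstein ellipse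
`B_r = {((r+r⁻¹) cos φ)/2 + i ((r-r⁻¹) sin φ)/2}`, the minimum of `Re ((z - t)²)` over
`t ∈ [-1,1]` and `z ∈ B_r` equals `-(r - r⁻¹)²/4` (and is attained). -/
theorem bernstein_ellipse_min (r : ℝ) (hr : 1 < r) :
    IsLeast {y : ℝ | ∃ t ∈ Set.Icc (-1 : ℝ) 1, ∃ φ : ℝ,
        y = (((((r + r⁻¹) * Real.cos φ) / 2 : ℝ) +
          ((((r - r⁻¹) * Real.sin φ) / 2 : ℝ) : ℂ) * Complex.I - (t : ℂ)) ^ 2).re}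
      (-(r - r⁻¹) ^ 2 / 4) := by
  constructor
  · refine ⟨0, by norm_num, Real.pi / 2, ?_⟩
    simp [Real.cos_pi_div_two, Real.sin_pi_div_two, sq, Complex.mul_re]
    ring
  · rintro y ⟨t, ht, φ, rfl⟩
    have hre : (((((r + r⁻¹) * Real.cos φ) / 2 : ℝ) +
          ((((r - r⁻¹) * Real.sin φ) / 2 : ℝ) : ℂ) * Complex.I - (t : ℂ)) ^ 2).re
        = (((r + r⁻¹) * Real.cos φ) / 2 - t) ^ 2 - (((r - r⁻¹) * Real.sin φ) / 2) ^ 2 := by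
      simp [sq, Complex.mul_re, Complex.sub_re, Complex.sub_im, Complex.add_re, Complex.add_im, Complex.cos_ofReal_re, Complex.sin_ofReal_re]
    rw [hre]
    nlinarith [sq_nonneg ((((r + r⁻¹) * Real.cos φ) / 2 - t)),
      Real.sin_sq_le_one φ, sq_nonneg (r - r⁻¹)]
end
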